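/- If α is irrational but not a quadratic irrational, then the only real numbers λ with λ·(ℤ + αℤ) = ℤ + αℤ are λ = 1 and λ = −1. -/

import Mathlib

/-! A multiplier `λ` of `ℤ + αℤ` maps `1` and `α` into it, so `λ = a + bα` and `λα = c + dα`;
eliminating `λ` gives `bα² + (a - d)α - c = 0`, hence `b = 0` as `α` is not quadratic, and `λ = a`
is an integer. Since `1` is also of the form `a (m + nα)`, comparing coefficients gives `am = 1`,
so `a = ±1`. -/

theorem AddSubgroup.mem_closure_one_pair {R : Type*} [Ring R] {α x : R} :
    x ∈ AddSubgroup.closure ({1, α} : Set R) ↔ ∃ m n : ℤ, (m : R) + n * α = x := by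
  simp only [AddSubgroup.mem_closure_pair, zsmul_eq_mul, mul_one]

section NotQuadratic

variable {α : ℝ} (hq : ¬ ∃ a b c : ℤ, a ≠ 0 ∧ (a : ℝ) * α ^ 2 + (b : ℝ) * α + (c : ℝ) = 0)
include hq

theorem eq_zero_of_quadratic_eq_zero {a b c : ℤ} (h : (a : ℝ) * α ^ 2 + b * α + c = 0) :
    a = 0 ∧ b = 0 ∧ c = 0 := by
  have ha : a = 0 := by_contra fun ha ↦ hq ⟨a, b, c, ha, h⟩
  subst ha
  have hb : b = 0 := by_contra fun hb ↦ hq ⟨b, c, 0, hb, by linear_combination α * h⟩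
  subst hb
  exact ⟨rfl, rfl, by exact_mod_cast (by simpa using h : (c : ℝ) = 0)⟩

theorem exists_intCast_eq_of_mul_mem_closure {l : ℝ}
    (hl : ∀ x ∈ AddSubgroup.closure ({1, α} : Set ℝ),
      l * x ∈ AddSubgroup.closure ({1, α} : Set ℝ)) :
    ∃ a : ℤ, l = a := by
  obtain ⟨a, b, hab⟩ := AddSubgroup.mem_closure_one_pair.mp
    (by simpa using hl 1 (AddSubgroup.subset_closure (by simp)))
  obtain ⟨c, d, hcd⟩ :=
    AddSubgroup.mem_closure_one_pair.mp (hl α (AddSubgroup.subset_closure (by simp)))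
  obtain ⟨rfl, -, -⟩ := eq_zero_of_quadratic_eq_zero hq (a := b) (b := a - d) (c := -c)
    (by push_cast; linear_combination α * hab - hcd)
  exact ⟨a, by simp [← hab]⟩

theorem eq_one_or_neg_one_of_intCast_mul_mem_closure_eq_one {a : ℤ} {x : ℝ}
    (hx : x ∈ AddSubgroup.closure ({1, α} : Set ℝ)) (hax : a * x = 1) : a = 1 ∨ a = -1 := by
  obtain ⟨m, n, rfl⟩ := AddSubgroup.mem_closure_one_pair.mp hx
  obtain ⟨-, -, ham⟩ := eq_zero_of_quadratic_eq_zero hq (a := 0) (b := a * n) (c := a * m - 1)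
    (by push_cast; linear_combination hax)
  exact Int.eq_one_or_neg_one_of_mul_eq_one (v := m) (by omega)

end NotQuadratic

theorem multipliers_pm_one_general (α : ℝ)
    (hq : ¬ ∃ a b c : ℤ, a ≠ 0 ∧ (a : ℝ) * α ^ 2 + (b : ℝ) * α + (c : ℝ) = 0) (l : ℝ)
    (h : (fun x => l * x) '' ((AddSubgroup.closure ({1, α} : Set ℝ) : AddSubgroup ℝ) : Set ℝ)
        = ((AddSubgroup.closure ({1, α} : Set ℝ) : AddSubgroup ℝ) : Set ℝ)) :
    l = 1 ∨ l = -1 := by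
  obtain ⟨a, rfl⟩ := exists_intCast_eq_of_mul_mem_closure hq fun x hx ↦ h ▸ Set.mem_image_of_mem _ hx
  obtain ⟨x, hx, hax⟩ : (1 : ℝ) ∈ (fun x => (a : ℝ) * x) '' (AddSubgroup.closure {1, α} : Set ℝ) := by
    rw [h]; exact AddSubgroup.subset_closure (by simp)
  exact_mod_cast eq_one_or_neg_one_of_intCast_mul_mem_closure_eq_one hq hx hax

/-- If `α` is irrational but not a quadratic irrational, the only `λ` with
`λ·(ℤ + αℤ) = ℤ + αℤ` are `±1`. -/
theorem multipliers_pm_one (α : ℝ) (hα : Irrational α)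
    (hq : ¬ ∃ a b c : ℤ, a ≠ 0 ∧ (a : ℝ) * α ^ 2 + (b : ℝ) * α + (c : ℝ) = 0) (l : ℝ)
    (h : (fun x => l * x) '' ((AddSubgroup.closure ({1, α} : Set ℝ) : AddSubgroup ℝ) : Set ℝ)
        = ((AddSubgroup.closure ({1, α} : Set ℝ) : AddSubgroup ℝ) : Set ℝ)) :
    l = 1 ∨ l = -1 :=
  multipliers_pm_one_general α hq l h
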